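/- Let Q be a positive-definite quadratic form on V with inverse tensor P (so PQ = id). Then for any J ∈ V* and any bounded measurable I : V → ℝ, ∫_V exp(−½ φQφ + I(φ) + J(φ)) dφ / ∫_V exp(−½ φQφ) dφ = exp(½ JPJ) · (N(P) ∗ (exp∘I))(PJ), where N(P) is the normalized Gaussian with covariance P and PJ ∈ V is the contraction. -/
import Mathlib


open MeasureTheory

variable {V : Type*} [NormedAddCommGroup V] [NormedSpace ℝ V] [FiniteDimensional ℝ V]
  [MeasurableSpace V] [BorelSpace V]

/-- Convolution of two real-valued functions: (f∗g)(x) = ∫ f(x−y) g(y) dy. -/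
noncomputable def convol (μ : Measure V) (f g : V → ℝ) (x : V) : ℝ :=
  ∫ y, f (x - y) * g y ∂μ

/-- The normalized centered Gaussian with inverse covariance form Q:
N(x) = exp(−½ Q(x,x)) / ∫ exp(−½ Q(x',x')) dx'. -/
noncomputable def gauss (μ : Measure V) (Q : V →ₗ[ℝ] Module.Dual ℝ V) (x : V) : ℝ :=
  Real.exp (-(1/2) * Q x x) / ∫ y, Real.exp (-(1/2) * Q y y) ∂μ

/-- The moment generating function as a convolution:
Z[P,I](J) = exp(½ JPJ) · (N(P) ∗ (exp∘I))(PJ), where Q is the kinetic form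
with inverse tensor P, I is bounded measurable, and J ∈ V*. -/
theorem Z_as_convolution (μ : Measure V) [μ.IsAddHaarMeasure]
    (Q : V →ₗ[ℝ] Module.Dual ℝ V) (P : Module.Dual ℝ V →ₗ[ℝ] V)
    (hPQ : ∀ x : V, P (Q x) = x) (hQP : ∀ k : Module.Dual ℝ V, Q (P k) = k)
    (hsymm : ∀ x y : V, Q x y = Q y x)
    (hpos : ∀ x : V, x ≠ 0 → 0 < Q x x)
    (J : Module.Dual ℝ V) (I : V → ℝ)
    (hImeas : Measurable I) (hIbdd : ∃ c : ℝ, ∀ x : V, |I x| ≤ c) :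
    (∫ φ, Real.exp (-(1/2) * Q φ φ + I φ + J φ) ∂μ) /
        (∫ φ, Real.exp (-(1/2) * Q φ φ) ∂μ) =
      Real.exp ((1/2) * J (P J)) *
        convol μ (gauss μ Q) (fun y => Real.exp (I y)) (P J) := by
  have key : ∀ φ : V, Real.exp (-(1/2) * Q φ φ + I φ + J φ)
      = Real.exp ((1/2) * J (P J)) *
        (Real.exp (-(1/2) * Q (φ - P J) (φ - P J)) * Real.exp (I φ)) := by
    intro φ
    rw [← Real.exp_add, ← Real.exp_add]
    congr 1
    have h1 : Q φ (P J) = J φ := by rw [hsymm, hQP]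
    have hq : Q (φ - P J) (φ - P J) = Q φ φ - 2 * J φ + J (P J) := by
      simp only [map_sub, LinearMap.sub_apply, hQP, h1]
      ring
    rw [hq]; ring
  simp only [key]
  rw [MeasureTheory.integral_const_mul, mul_div_assoc]
  congr 1
  unfold convol gauss
  have hflip : ∀ y : V, Q (P J - y) (P J - y) = Q (y - P J) (y - P J) := by
    intro y
    rw [← neg_sub y (P J)]; simp [hsymm y (P J)]; ring
  simp only [hflip, div_mul_eq_mul_div]
  rw [integral_div]
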